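/- For every n ≥ 0, the q-Fubini number F_{n,q} := ∑_{k=0}^{n} [k]!_q · {n brace k}_q equals ∑_{ω} q^{Inv*(ω)}, where the sum runs over all ordered set partitions ω of {1, …, n} (into any number of blocks). -/

import Mathlib

open Finset Polynomial

/-- The q-integer `[n]_q = 1 + q + ⋯ + q^(n-1)`. -/
def qInt {R : Type*} [CommSemiring R] (q : R) (n : ℕ) : R :=
  ∑ i ∈ Finset.range n, q ^ i

/-- The q-factorial `[n]!_q = [1]_q [2]_q ⋯ [n]_q`. -/
def qFact {R : Type*} [CommSemiring R] (q : R) (n : ℕ) : R :=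
  ∏ i ∈ Finset.range n, qInt q (i + 1)

/-- The Carlitz q-Stirling numbers of the second kind, defined by the recurrence
`{n brace m}_q = {n-1 brace m-1}_q + [m]_q {n-1 brace m}_q`. -/
def qStirling {R : Type*} [CommSemiring R] (q : R) : ℕ → ℕ → R
  | 0, 0 => 1
  | 0, _ + 1 => 0
  | _ + 1, 0 => 0
  | n + 1, m + 1 => qStirling q n m + qInt q (m + 1) * qStirling q n (m + 1)

/-- `ω` is an ordered set partition of the finite set `S`: a list of pairwise disjoint
nonempty blocks whose union is `S`. -/
def IsOrderedPartitionOf (S : Finset ℕ) (ω : List (Finset ℕ)) : Prop :=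
  (∀ B ∈ ω, B.Nonempty) ∧ List.Pairwise (fun B C => Disjoint B C) ω ∧
    (∀ x, x ∈ S ↔ ∃ B ∈ ω, x ∈ B)

/-- The inversion number `Inv*(ω)` of an ordered set partition `ω = (B₁, …, B_k)`:
the number of pairs `(b, B_j)` with `b ∈ B_i`, `i < j`, and `b > min B_j`. -/
def invStar (ω : List (Finset ℕ)) : ℕ :=
  ∑ p ∈ (Finset.range ω.length ×ˢ Finset.range ω.length).filter (fun p => p.1 < p.2),
    ((ω.getD p.1 ∅).filter (fun b => ∃ c ∈ ω.getD p.2 ∅, c < b)).card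

/-!
Insert the largest element `n + 1` into an ordered partition `ω` of `{1, …, n}` with `k` blocks.
As a new singleton block in position `j` it creates `k - j` new inversions, and added to the
block in position `i` it creates `k - 1 - i`, since `n + 1` exceeds the minimum of every later
block and nothing else changes. Every ordered partition of `{1, …, n + 1}` arises exactly once
(delete `n + 1` and any block it leaves empty), so counting by number of blocks, the inversion
polynomials satisfy `P(n+1, k) = [k]_q (P(n, k-1) + P(n, k))`, which is the Carlitz recurrence
for `[k]!_q {n+1 brace k}_q`.
-/

lemma sum_filter_lt_range_product {M : Type*} [AddCommMonoid M] (f : ℕ → ℕ → M) (n : ℕ) :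
    ∑ p ∈ (range n ×ˢ range n).filter (fun p => p.1 < p.2), f p.1 p.2
      = ∑ j ∈ range n, ∑ i ∈ range j, f i j := by
  rw [sum_filter, sum_product_right]
  refine sum_congr rfl fun j hj => ?_
  rw [← sum_filter]
  congr 1
  ext i
  simp only [mem_filter, mem_range] at hj ⊢
  omega

lemma sum_range_length_getD {α M : Type*} [AddCommMonoid M] (g : α → M) (d : α) (l : List α) :
    ∑ j ∈ range l.length, g (l.getD j d) = (l.map g).sum := by
  induction l with
  | nil => simp
  | cons a l ih =>
    simp only [List.length_cons, sum_range_succ', List.getD_cons_succ, List.getD_cons_zero, ih,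
      List.map_cons, List.sum_cons, add_comm]

namespace List

variable {α : Type*}

theorem map_modify_eq_map {β : Type*} {f : α → α} {g : α → β}
    (h : ∀ a, g (f a) = g a) (l : List α) (i : ℕ) : (l.modify i f).map g = l.map g := by
  induction l generalizing i with
  | nil => simp
  | cons a l ih => cases i <;> simp [h, ih]

theorem insertIdx_length_append (s t : List α) (a : α) :
    (s ++ t).insertIdx s.length a = s ++ a :: t := by
  induction s <;> simp_all [insertIdx_succ_cons]

theorem modify_length_append (s t : List α) (b : α) (f : α → α) :
    (s ++ b :: t).modify s.length f = s ++ f b :: t := by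
  induction s <;> simp_all

theorem insertIdx_inj_of_notMem {l : List α} {a : α} (ha : a ∉ l) {i j : ℕ}
    (hi : i ≤ l.length) (hj : j ≤ l.length) (h : l.insertIdx i a = l.insertIdx j a) :
    i = j := by
  by_contra hne
  wlog hij : i < j generalizing i j
  · exact this hj hi h.symm (Ne.symm hne) (by omega)
  have := congrArg (·[i]?) h
  simp only [getElem?_insertIdx_self, getElem?_insertIdx_of_lt hij, hi, if_true] at this
  exact ha (mem_of_getElem? this.symm)

theorem modify_inj_of_ne {l : List α} {f : α → α} (hf : ∀ a ∈ l, f a ≠ a) {i j : ℕ}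
    (hi : i < l.length) (hj : j < l.length) (h : l.modify i f = l.modify j f) : i = j := by
  by_contra hne
  wlog hij : i < j generalizing i j
  · exact this hj hi h.symm (Ne.symm hne) (by omega)
  have := congrArg (·[i]?) h
  simp only [getElem?_modify_eq, getElem?_modify_ne _ _ hij.ne', getElem?_eq_getElem hi] at this
  exact hf _ (getElem_mem hi) (Option.some_injective _ this)

end List

section QAnalogues

variable {R : Type*} [CommSemiring R] (q : R)

lemma qInt_eq_sum_pow_sub (n : ℕ) : qInt q n = ∑ i ∈ range n, q ^ (n - 1 - i) :=
  (sum_range_reflect (q ^ ·) n).symm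

lemma qFact_succ (k : ℕ) : qFact q (k + 1) = qFact q k * qInt q (k + 1) :=
  prod_range_succ _ k

lemma qStirling_eq_zero_of_lt {n k : ℕ} (h : n < k) : qStirling q n k = 0 := by
  induction n generalizing k with
  | zero => obtain ⟨k, rfl⟩ := Nat.exists_eq_succ_of_ne_zero h.ne'; rfl
  | succ n ih =>
    obtain ⟨k, rfl⟩ := Nat.exists_eq_succ_of_ne_zero (by omega : k ≠ 0)
    rw [qStirling, ih (by omega), ih (by omega), mul_zero, add_zero]

lemma sum_qFact_mul_qStirling_succ (g : ℕ → R) (n : ℕ) :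
    ∑ k ∈ range (n + 1),
        qFact q k * qStirling q n k * (qInt q (k + 1) * g (k + 1) + qInt q k * g k)
      = ∑ k ∈ range (n + 2), qFact q k * qStirling q (n + 1) k * g k := by
  have shift : ∑ k ∈ range (n + 1), qFact q k * qStirling q n k * (qInt q k * g k)
      = ∑ k ∈ range (n + 1),
          qFact q (k + 1) * qStirling q n (k + 1) * (qInt q (k + 1) * g (k + 1)) := by
    rw [sum_range_succ', sum_range_succ _ n, qStirling_eq_zero_of_lt q (Nat.lt_succ_self n)]
    simp [qInt]
  rw [sum_range_succ' _ (n + 1)]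
  simp only [mul_add, sum_add_distrib]
  rw [shift]
  simp only [qStirling, qFact_succ, mul_zero, zero_mul, add_zero, ← sum_add_distrib]
  exact sum_congr rfl fun k _ => by ring

end QAnalogues

def blockInv (B C : Finset ℕ) : ℕ :=
  (B.filter fun b => ∃ c ∈ C, c < b).card

lemma blockInv_empty_left : blockInv ∅ = fun _ => 0 := rfl

lemma blockInv_insert_right {m : ℕ} {B : Finset ℕ} (hB : ∀ b ∈ B, b ≤ m)
    (C : Finset ℕ) : blockInv B (insert m C) = blockInv B C := by
  unfold blockInv
  congr 1
  refine filter_congr fun b hb => ?_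
  simp only [mem_insert, exists_eq_or_imp, or_iff_right_iff_imp]
  exact fun hmb => absurd (hB b hb) (not_le.2 hmb)

lemma blockInv_singleton_right {m : ℕ} {B : Finset ℕ} (hB : ∀ b ∈ B, b ≤ m) :
    blockInv B {m} = 0 := by
  rw [← insert_empty_eq, blockInv_insert_right hB]
  simp [blockInv]

lemma blockInv_insert_left {m : ℕ} {B C : Finset ℕ} (hmB : m ∉ B) (hC : ∃ c ∈ C, c < m) :
    blockInv (insert m B) C = blockInv B C + 1 := by
  rw [blockInv, filter_insert, if_pos hC, card_insert_of_notMem (fun h => hmB (mem_filter.1 h).1)]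
  rfl

lemma invStar_eq_sum_range (ω : List (Finset ℕ)) :
    invStar ω =
      ∑ j ∈ range ω.length, ∑ i ∈ range j, blockInv (ω.getD i ∅) (ω.getD j ∅) :=
  sum_filter_lt_range_product (fun i j => blockInv (ω.getD i ∅) (ω.getD j ∅)) ω.length

lemma invStar_cons (B : Finset ℕ) (ω : List (Finset ℕ)) :
    invStar (B :: ω) = (ω.map (blockInv B)).sum + invStar ω := by
  simp only [invStar_eq_sum_range, List.length_cons, sum_range_succ' _ ω.length,
    sum_range_succ' (fun i => blockInv _ _), List.getD_cons_succ, List.getD_cons_zero,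
    sum_range_zero, zero_add, sum_add_distrib, sum_range_length_getD, add_comm]

section

variable {m : ℕ} {ω : List (Finset ℕ)}

lemma sum_map_blockInv_insert_left {B : Finset ℕ} (hmB : m ∉ B) (hne : ∀ C ∈ ω, C.Nonempty)
    (hlt : ∀ C ∈ ω, ∀ c ∈ C, c < m) :
    (ω.map (blockInv (insert m B))).sum = (ω.map (blockInv B)).sum + ω.length := by
  induction ω with
  | nil => rfl
  | cons C ω ih =>
    simp only [List.forall_mem_cons] at hne hlt
    obtain ⟨c, hc⟩ := hne.1
    simp only [List.map_cons, List.sum_cons, List.length_cons,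
      blockInv_insert_left hmB ⟨c, hc, hlt.1 c hc⟩, ih hne.2 hlt.2]
    ring

lemma invStar_singleton_cons (hne : ∀ C ∈ ω, C.Nonempty)
    (hlt : ∀ C ∈ ω, ∀ c ∈ C, c < m) : invStar ({m} :: ω) = invStar ω + ω.length := by
  rw [invStar_cons, ← insert_empty_eq, sum_map_blockInv_insert_left (notMem_empty m) hne hlt,
    blockInv_empty_left]
  simp [add_comm]

lemma invStar_insertIdx_singleton (hne : ∀ C ∈ ω, C.Nonempty)
    (hlt : ∀ C ∈ ω, ∀ c ∈ C, c < m) {j : ℕ} (hj : j ≤ ω.length) :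
    invStar (ω.insertIdx j {m}) = invStar ω + (ω.length - j) := by
  induction ω generalizing j with
  | nil => simp_all [invStar_singleton_cons]
  | cons B ω ih =>
    cases j with
    | zero => simp [invStar_singleton_cons hne hlt]
    | succ j =>
      simp only [List.forall_mem_cons, List.length_cons] at hne hlt hj
      rw [List.insertIdx_succ_cons, invStar_cons, invStar_cons,
        ((List.perm_insertIdx _ _ (by omega)).map _).sum_eq, ih hne.2 hlt.2 (by omega)]
      simp only [List.map_cons, List.sum_cons, List.length_cons, zero_add,
        blockInv_singleton_right fun b hb => (hlt.1 b hb).le]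
      omega

lemma invStar_modify_insert (hne : ∀ C ∈ ω, C.Nonempty)
    (hlt : ∀ C ∈ ω, ∀ c ∈ C, c < m) (i : ℕ) :
    invStar (ω.modify i (insert m)) = invStar ω + (ω.length - 1 - i) := by
  induction ω generalizing i with
  | nil => simp
  | cons B ω ih =>
    simp only [List.forall_mem_cons] at hne hlt
    cases i with
    | zero =>
      rw [List.modify_zero_cons, invStar_cons, invStar_cons,
        sum_map_blockInv_insert_left (fun h => lt_irrefl m (hlt.1 m h)) hne.2 hlt.2]
      simp only [List.length_cons]
      omega
    | succ i =>
      rw [List.modify_succ_cons, invStar_cons, invStar_cons, ih hne.2 hlt.2,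
        List.map_modify_eq_map (blockInv_insert_right fun b hb => (hlt.1 b hb).le)]
      simp only [List.length_cons]
      omega

end

def insertions (m : ℕ) (ω : List (Finset ℕ)) : Finset (List (Finset ℕ)) :=
  (range (ω.length + 1)).image (fun j => ω.insertIdx j {m}) ∪
    (range ω.length).image (fun i => ω.modify i (insert m))

def eraseFromBlocks (m : ℕ) (τ : List (Finset ℕ)) : List (Finset ℕ) :=
  (τ.map (·.erase m)).filter (·.Nonempty)

section

variable {m : ℕ} {ω : List (Finset ℕ)}

lemma eraseFromBlocks_eq_self (hω : ∀ B ∈ ω, B.Nonempty ∧ m ∉ B) :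
    eraseFromBlocks m ω = ω := by
  have hmap : ω.map (·.erase m) = ω :=
    (List.map_congr_left fun B hB => erase_eq_of_notMem (hω B hB).2).trans (List.map_id' ω)
  rw [eraseFromBlocks, hmap, List.filter_eq_self]
  simpa using fun B hB => (hω B hB).1

lemma eraseFromBlocks_insertIdx_singleton (j : ℕ) :
    eraseFromBlocks m (ω.insertIdx j {m}) = eraseFromBlocks m ω := by
  induction ω generalizing j with
  | nil => cases j <;> simp [eraseFromBlocks]
  | cons B ω ih => cases j <;> simp_all [eraseFromBlocks, List.filter_cons]

lemma eraseFromBlocks_modify_insert (i : ℕ) :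
    eraseFromBlocks m (ω.modify i (insert m)) = eraseFromBlocks m ω := by
  induction ω generalizing i with
  | nil => simp
  | cons B ω ih => cases i <;> simp_all [eraseFromBlocks, List.filter_cons]

lemma eraseFromBlocks_of_mem_insertions (hω : ∀ B ∈ ω, B.Nonempty ∧ m ∉ B)
    {τ : List (Finset ℕ)} (hτ : τ ∈ insertions m ω) : eraseFromBlocks m τ = ω := by
  rw [insertions, mem_union, mem_image, mem_image] at hτ
  rcases hτ with ⟨j, -, rfl⟩ | ⟨i, -, rfl⟩
  · rw [eraseFromBlocks_insertIdx_singleton, eraseFromBlocks_eq_self hω]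
  · rw [eraseFromBlocks_modify_insert, eraseFromBlocks_eq_self hω]

end

namespace IsOrderedPartitionOf

variable {S : Finset ℕ} {m : ℕ} {ω τ : List (Finset ℕ)}

lemma subset (h : IsOrderedPartitionOf S ω) {B : Finset ℕ} (hB : B ∈ ω) : B ⊆ S :=
  fun x hx => (h.2.2 x).2 ⟨B, hB, hx⟩

lemma perm (h : IsOrderedPartitionOf S ω) (hp : ω.Perm τ) : IsOrderedPartitionOf S τ :=
  ⟨fun B hB => h.1 B (hp.mem_iff.2 hB), hp.pairwise h.2.1 fun hBC => hBC.symm,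
    fun x => (h.2.2 x).trans (by simp only [hp.mem_iff])⟩

lemma singleton_cons (h : IsOrderedPartitionOf S ω) (hm : m ∉ S) :
    IsOrderedPartitionOf (insert m S) ({m} :: ω) := by
  refine ⟨by simpa using h.1, List.pairwise_cons.2 ⟨fun C hC => ?_, h.2.1⟩, fun x => ?_⟩
  · exact disjoint_singleton_left.2 fun hmC => hm (h.subset hC hmC)
  · simp [h.2.2 x, eq_comm]

lemma insert_cons {B : Finset ℕ} (h : IsOrderedPartitionOf S (B :: ω)) (hm : m ∉ S) :
    IsOrderedPartitionOf (insert m S) (insert m B :: ω) := by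
  have hω := List.pairwise_cons.1 h.2.1
  refine ⟨?_, List.pairwise_cons.2 ⟨fun C hC => ?_, hω.2⟩, fun x => ?_⟩
  · simpa using fun C hC => h.1 C (List.mem_cons_of_mem B hC)
  · exact disjoint_insert_left.2
      ⟨fun hmC => hm (h.subset (List.mem_cons_of_mem B hC) hmC), hω.1 C hC⟩
  · simp [h.2.2 x, or_assoc]

lemma insertIdx_singleton (h : IsOrderedPartitionOf S ω) (hm : m ∉ S) {j : ℕ}
    (hj : j ≤ ω.length) : IsOrderedPartitionOf (insert m S) (ω.insertIdx j {m}) :=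
  (h.singleton_cons hm).perm (List.perm_insertIdx _ _ hj).symm

lemma modify_insert (h : IsOrderedPartitionOf S ω) (hm : m ∉ S) {i : ℕ} (hi : i < ω.length) :
    IsOrderedPartitionOf (insert m S) (ω.modify i (insert m)) := by
  obtain ⟨l₁, B, l₂, rfl, -, hmod⟩ := List.exists_of_modify (insert m) hi
  rw [hmod]
  exact ((h.perm List.perm_middle).insert_cons hm).perm List.perm_middle.symm

lemma of_mem_insertions (h : IsOrderedPartitionOf S ω) (hm : m ∉ S)
    (hτ : τ ∈ insertions m ω) : IsOrderedPartitionOf (insert m S) τ := by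
  rw [insertions, mem_union, mem_image, mem_image] at hτ
  rcases hτ with ⟨j, hj, rfl⟩ | ⟨i, hi, rfl⟩
  · exact h.insertIdx_singleton hm (Nat.lt_succ_iff.1 (mem_range.1 hj))
  · exact h.modify_insert hm (mem_range.1 hi)

lemma eraseFromBlocks (h : IsOrderedPartitionOf S τ) (m : ℕ) :
    IsOrderedPartitionOf (S.erase m) (eraseFromBlocks m τ) := by
  refine ⟨fun B hB => by simpa using (List.mem_filter.1 hB).2, ?_, fun x => ?_⟩
  · exact ((h.2.1.map _ fun _ _ hBC => hBC.mono (erase_subset m _) (erase_subset m _)).filter _)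
  · simp only [mem_erase, h.2.2 x, _root_.eraseFromBlocks, List.mem_filter, List.mem_map,
      decide_eq_true_eq]
    constructor
    · rintro ⟨hxm, B, hB, hxB⟩
      have hx : x ∈ B.erase m := mem_erase.2 ⟨hxm, hxB⟩
      exact ⟨B.erase m, ⟨⟨B, hB, rfl⟩, x, hx⟩, hx⟩
    · rintro ⟨-, ⟨⟨B, hB, rfl⟩, -⟩, hx⟩
      exact ⟨(mem_erase.1 hx).1, B, hB, (mem_erase.1 hx).2⟩

lemma exists_mem_insertions (h : IsOrderedPartitionOf S τ) (hm : m ∈ S) :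
    ∃ ω, (∀ B ∈ ω, B.Nonempty ∧ m ∉ B) ∧ τ ∈ insertions m ω := by
  obtain ⟨B, hB, hmB⟩ := (h.2.2 m).1 hm
  obtain ⟨s, t, rfl⟩ := List.append_of_mem hB
  have hst : ∀ C ∈ s ++ t, C.Nonempty ∧ m ∉ C := by
    have hdisj := (List.pairwise_cons.1 (h.2.1.perm List.perm_middle fun hBC => hBC.symm)).1
    exact fun C hC => ⟨h.1 C (List.perm_middle.mem_iff.2 (List.mem_cons_of_mem B hC)),
      fun hmC => disjoint_left.1 (hdisj C hC) hmB hmC⟩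
  by_cases hBm : B = {m}
  · subst hBm
    refine ⟨s ++ t, hst, mem_union_left _ (mem_image.2 ⟨s.length, ?_, ?_⟩)⟩
    · simp
    · exact List.insertIdx_length_append s t {m}
  · refine ⟨s ++ B.erase m :: t, fun C hC => ?_,
      mem_union_right _ (mem_image.2 ⟨s.length, ?_, ?_⟩)⟩
    · rcases List.mem_cons.1 (List.perm_middle.mem_iff.1 hC) with rfl | hC
      · exact ⟨(erase_nonempty hmB).2 ((nontrivial_iff_ne_singleton hmB).2 hBm),
          notMem_erase m B⟩
      · exact hst C hC
    · simp
    · rw [List.modify_length_append, insert_erase hmB]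

lemma mem_insertions_eraseFromBlocks (h : IsOrderedPartitionOf S τ) (hm : m ∈ S) :
    τ ∈ insertions m (_root_.eraseFromBlocks m τ) := by
  obtain ⟨ω, hω, hτ⟩ := h.exists_mem_insertions hm
  rwa [eraseFromBlocks_of_mem_insertions hω hτ]

end IsOrderedPartitionOf

def orderedPartitions : ℕ → Finset (List (Finset ℕ))
  | 0 => {[]}
  | n + 1 => (orderedPartitions n).biUnion (insertions (n + 1))

lemma mem_orderedPartitions {n : ℕ} {ω : List (Finset ℕ)} :
    ω ∈ orderedPartitions n ↔ IsOrderedPartitionOf (Icc 1 n) ω := by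
  induction n generalizing ω with
  | zero =>
    simp only [orderedPartitions, mem_singleton]
    constructor
    · rintro rfl
      simp [IsOrderedPartitionOf]
    rintro ⟨hne, -, hmem⟩
    refine List.eq_nil_iff_forall_not_mem.2 fun B hB => ?_
    obtain ⟨x, hx⟩ := hne B hB
    simpa using (hmem x).2 ⟨B, hB, hx⟩
  | succ n ih =>
    have hn : n + 1 ∉ Icc 1 n := by simp
    rw [orderedPartitions, mem_biUnion, ← insert_Icc_right_eq_Icc_add_one (by omega)]
    constructor
    · rintro ⟨σ, hσ, hω⟩
      exact (ih.1 hσ).of_mem_insertions hn hω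
    · intro h
      refine ⟨eraseFromBlocks (n + 1) ω, ih.2 ?_,
        h.mem_insertions_eraseFromBlocks (mem_insert_self _ _)⟩
      simpa [erase_insert hn] using h.eraseFromBlocks (n + 1)

lemma nonempty_and_lt_of_mem_orderedPartitions {n : ℕ} {ω : List (Finset ℕ)}
    (hω : ω ∈ orderedPartitions n) : ∀ B ∈ ω, B.Nonempty ∧ ∀ b ∈ B, b < n + 1 := by
  have h := mem_orderedPartitions.1 hω
  exact fun B hB => ⟨h.1 B hB, fun b hb => Nat.lt_succ_of_le (mem_Icc.1 (h.subset hB hb)).2⟩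

lemma pairwiseDisjoint_insertions (n : ℕ) :
    (orderedPartitions n : Set (List (Finset ℕ))).PairwiseDisjoint (insertions (n + 1)) := by
  intro ω₁ h₁ ω₂ h₂ hne
  refine disjoint_left.2 fun τ hτ₁ hτ₂ => hne ?_
  have key : ∀ ω ∈ orderedPartitions n, τ ∈ insertions (n + 1) ω →
      eraseFromBlocks (n + 1) τ = ω := fun ω hω hτ => by
    have hω := nonempty_and_lt_of_mem_orderedPartitions hω
    exact eraseFromBlocks_of_mem_insertions
      (fun B hB => ⟨(hω B hB).1, fun h => lt_irrefl _ ((hω B hB).2 _ h)⟩) hτ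
  exact (key ω₁ h₁ hτ₁).symm.trans (key ω₂ h₂ hτ₂)

section InversionPolynomial

variable {R : Type*} [CommSemiring R] (q : R)

lemma sum_insertions_mul_pow_invStar (g : ℕ → R) {m : ℕ} {ω : List (Finset ℕ)}
    (hne : ∀ C ∈ ω, C.Nonempty) (hlt : ∀ C ∈ ω, ∀ c ∈ C, c < m) :
    ∑ τ ∈ insertions m ω, g τ.length * q ^ invStar τ
      = (qInt q (ω.length + 1) * g (ω.length + 1) + qInt q ω.length * g ω.length)
        * q ^ invStar ω := by
  have hm : ∀ C ∈ ω, m ∉ C := fun C hC hmC => lt_irrefl m (hlt C hC m hmC)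
  have hdisj : Disjoint ((range (ω.length + 1)).image fun j => ω.insertIdx j {m})
      ((range ω.length).image fun i => ω.modify i (insert m)) := by
    simp only [disjoint_left, mem_image, mem_range]
    rintro _ ⟨j, hj, rfl⟩ ⟨i, -, h⟩
    simpa [List.length_insertIdx_of_le_length (Nat.lt_succ_iff.1 hj)] using congrArg List.length h
  have hnew : ∀ j ∈ range (ω.length + 1),
      g (ω.insertIdx j {m}).length * q ^ invStar (ω.insertIdx j {m})
        = g (ω.length + 1) * q ^ invStar ω * q ^ (ω.length + 1 - 1 - j) := by
    intro j hj
    have hj := Nat.lt_succ_iff.1 (mem_range.1 hj)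
    rw [List.length_insertIdx_of_le_length hj, invStar_insertIdx_singleton hne hlt hj, pow_add,
      Nat.add_sub_cancel, mul_assoc]
  have hold : ∀ i ∈ range ω.length,
      g (ω.modify i (insert m)).length * q ^ invStar (ω.modify i (insert m))
        = g ω.length * q ^ invStar ω * q ^ (ω.length - 1 - i) := by
    intro i _
    rw [List.length_modify, invStar_modify_insert hne hlt, pow_add, mul_assoc]
  rw [insertions, sum_union hdisj, sum_image, sum_image, sum_congr rfl hnew, sum_congr rfl hold,
    ← mul_sum, ← mul_sum, ← qInt_eq_sum_pow_sub, ← qInt_eq_sum_pow_sub]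
  · ring
  · exact fun i hi j hj h => List.modify_inj_of_ne (fun C hC => by simpa using hm C hC)
      (mem_range.1 hi) (mem_range.1 hj) h
  · exact fun i hi j hj h =>
      List.insertIdx_inj_of_notMem (fun hmem => hm _ hmem (mem_singleton_self m))
      (Nat.lt_succ_iff.1 (mem_range.1 hi)) (Nat.lt_succ_iff.1 (mem_range.1 hj)) h

/-- Weighting by a function `g` of the number of blocks is what makes the induction on `n` go
through: one insertion step replaces `g` by `k ↦ [k+1]_q g (k+1) + [k]_q g k`. -/
theorem sum_orderedPartitions_mul_pow_invStar (g : ℕ → R) (n : ℕ) :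
    ∑ ω ∈ orderedPartitions n, g ω.length * q ^ invStar ω
      = ∑ k ∈ range (n + 1), qFact q k * qStirling q n k * g k := by
  induction n generalizing g with
  | zero => simp [orderedPartitions, qFact, qStirling, invStar]
  | succ n ih =>
    rw [orderedPartitions, sum_biUnion (pairwiseDisjoint_insertions n),
      ← sum_qFact_mul_qStirling_succ, ← ih]
    refine sum_congr rfl fun ω hω => ?_
    have hω := nonempty_and_lt_of_mem_orderedPartitions hω
    exact sum_insertions_mul_pow_invStar q g (fun C hC => (hω C hC).1) fun C hC => (hω C hC).2

end InversionPolynomial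

theorem qFubini_eq_sum_invStar (n : ℕ) :
    (∑ k ∈ Finset.range (n + 1),
        qFact (Polynomial.X : Polynomial ℚ) k * qStirling (Polynomial.X : Polynomial ℚ) n k)
      = ∑ᶠ ω ∈ {ω : List (Finset ℕ) | IsOrderedPartitionOf (Finset.Icc 1 n) ω},
          (Polynomial.X : Polynomial ℚ) ^ invStar ω := by
  have hset :
      {ω : List (Finset ℕ) | IsOrderedPartitionOf (Icc 1 n) ω} = orderedPartitions n := by
    ext ω
    simp [mem_orderedPartitions]
  rw [hset, finsum_mem_coe_finset]
  simpa using (sum_orderedPartitions_mul_pow_invStar (X : ℚ[X]) (fun _ => 1) n).symm
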